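/- arXiv:2510.04144 — 2 statements merged into one kernel-verified Lean document; each statement's English description precedes it below -/
import Mathlib

section
/- If z(t) is a unit-speed geodesic in the Poincaré disk (with metric 4|dz|²/(1-|z|²)², equivalently metric c⁻²|dz|² where c(z)=(1-|z|²)/2), with boundary endpoints z₋ = lim_{t→-∞} z(t) and z₊ = lim_{t→+∞} z(t) on the unit circle, then ż(t) = -(z(t)-z₋)(z(t)-z₊)/(z₊-z₋) for all t. -/
open Complex Filter

/-- The unit-speed geodesic `z_{β,a}(t)` of the Poincaré disk
(metric `c⁻²|dz|²`, `c(z) = (1-|z|²)/2`), parametrized by `(β,a)`. -/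
noncomputable def zgeo (β a t : ℝ) : ℂ :=
  Complex.exp (Complex.I * β) *
    (((2 + Complex.I * a) * (Real.tanh (t / 2) : ℂ) + Complex.I * a) /
      (Complex.I * a * (Real.tanh (t / 2) : ℂ) - 2 + Complex.I * a))

lemma tanh_hasDerivAt (x : ℝ) : HasDerivAt Real.tanh (1 - Real.tanh x ^ 2) x := by
  have h := (Real.hasDerivAt_sinh x).div (Real.hasDerivAt_cosh x) (Real.cosh_pos x).ne'
  have hc : Real.cosh x ≠ 0 := (Real.cosh_pos x).ne'
  have heq : (Real.cosh x * Real.cosh x - Real.sinh x * Real.sinh x) / Real.cosh x ^ 2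
      = 1 - Real.tanh x ^ 2 := by
    rw [Real.tanh_eq_sinh_div_cosh]
    field_simp
  rw [heq] at h
  exact h.congr_of_eventuallyEq (by
    filter_upwards with y
    rw [Real.tanh_eq_sinh_div_cosh]
    rfl)

lemma tanh_tendsto_atTop : Tendsto Real.tanh atTop (nhds 1) := by
  have key : ∀ x : ℝ, Real.tanh x = (1 - Real.exp (-(2*x))) / (1 + Real.exp (-(2*x))) := by
    intro x
    rw [Real.tanh_eq_sinh_div_cosh, Real.sinh_eq, Real.cosh_eq]
    have h1 : Real.exp x ≠ 0 := (Real.exp_pos x).ne'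
    have h2 : (0:ℝ) < 1 + Real.exp (-(2*x)) := by positivity
    have h3 : (0:ℝ) < Real.exp x + Real.exp (-x) := by positivity
    have hm : Real.exp (-(2*x)) = Real.exp (-x) * Real.exp (-x) := by
      rw [← Real.exp_add]; ring_nf
    rw [hm, Real.exp_neg]
    field_simp
  have hexp : Tendsto (fun x : ℝ => Real.exp (-(2*x))) atTop (nhds 0) :=
    Real.tendsto_exp_neg_atTop_nhds_zero.comp (tendsto_id.const_mul_atTop two_pos)
  have h : Tendsto (fun x : ℝ => (1 - Real.exp (-(2*x))) / (1 + Real.exp (-(2*x)))) atTop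
      (nhds ((1 - 0) / (1 + 0))) :=
    ((tendsto_const_nhds.sub hexp).div (tendsto_const_nhds.add hexp) (by norm_num))
  simpa [funext key] using h

lemma tanh_tendsto_atBot : Tendsto Real.tanh atBot (nhds (-1)) := by
  have h : Tendsto (fun x : ℝ => -Real.tanh (-x)) atBot (nhds (-1)) :=
    (tanh_tendsto_atTop.comp tendsto_neg_atBot_atTop).neg
  simpa [Real.tanh_neg] using h

lemma key_alg (E A U : ℂ) (hE : E ≠ 0) (hD : A*U - 2 + A ≠ 0) (hA1 : A - 1 ≠ 0) :
    E * (((2+A) * ((1-U^2)/2) * (A*U-2+A) - ((2+A)*U+A) * (A*((1-U^2)/2))) / (A*U-2+A)^2)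
      = -((E * (((2+A)*U+A)/(A*U-2+A)) - E) * (E * (((2+A)*U+A)/(A*U-2+A)) - E*(1+A)/(A-1)))
        / (E*(1+A)/(A-1) - E) := by
  rw [show E*(1+A)/(A-1) - E = 2*E/(A-1) by field_simp; ring]
  rw [← mul_div_assoc,
    div_eq_div_iff (pow_ne_zero 2 hD) (div_ne_zero (mul_ne_zero two_ne_zero hE) hA1)]
  field_simp
  ring

/-- If `z(t)` is a unit-speed geodesic of the Poincaré disk with backward endpoint
`z₋ = lim_{t→-∞} z(t)` and forward endpoint `z₊ = lim_{t→+∞} z(t)` on the unit circle,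
then `ż(t) = -(z(t)-z₋)(z(t)-z₊)/(z₊-z₋)` for all `t`. -/
theorem stmt0 (β a : ℝ) (zm zp : ℂ)
    (hm : Tendsto (zgeo β a) atBot (nhds zm))
    (hp : Tendsto (zgeo β a) atTop (nhds zp)) (t : ℝ) :
    deriv (zgeo β a) t = -((zgeo β a t - zm) * (zgeo β a t - zp)) / (zp - zm) := by
  set E : ℂ := Complex.exp (Complex.I * β) with hE
  set A : ℂ := Complex.I * a with hA
  have hEne : E ≠ 0 := Complex.exp_ne_zero _
  -- denominators are nonzero
  have hDen : ∀ u : ℂ, u.im = 0 → A * u - 2 + A ≠ 0 := by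
    intro u hu h
    have := congrArg Complex.re h
    simp [hA, Complex.add_re, Complex.sub_re, Complex.mul_re, hu] at this
  have hDen1 : A * (1:ℂ) - 2 + A ≠ 0 := hDen 1 rfl
  have hDenm1 : A * (-1:ℂ) - 2 + A ≠ 0 := hDen (-1) (by simp)
  have hA1 : A - 1 ≠ 0 := by
    intro h
    have := congrArg Complex.re h
    simp [hA, Complex.mul_re] at this
  -- identify the limits
  have hg : ∀ u : ℂ, A * u - 2 + A ≠ 0 →
      Tendsto (fun v : ℂ => E * (((2 + A) * v + A) / (A * v - 2 + A))) (nhds u)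
        (nhds (E * (((2 + A) * u + A) / (A * u - 2 + A)))) := by
    intro u hu
    apply Tendsto.const_mul
    exact (((continuous_const.mul continuous_id).add continuous_const).tendsto u).div
      ((((continuous_const.mul continuous_id).sub continuous_const).add
        continuous_const).tendsto u) hu
  have hUp : Tendsto (fun t : ℝ => ((Real.tanh (t/2) : ℝ) : ℂ)) atTop (nhds 1) := by
    have h : Tendsto (fun t : ℝ => Real.tanh (t/2)) atTop (nhds 1) :=
      tanh_tendsto_atTop.comp (tendsto_id.atTop_div_const (by norm_num))
    exact_mod_cast (Complex.continuous_ofReal.tendsto 1).comp h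
  have hUm : Tendsto (fun t : ℝ => ((Real.tanh (t/2) : ℝ) : ℂ)) atBot (nhds (-1)) := by
    have h : Tendsto (fun t : ℝ => Real.tanh (t/2)) atBot (nhds (-1)) :=
      tanh_tendsto_atBot.comp (tendsto_id.atBot_div_const (by norm_num))
    exact_mod_cast (Complex.continuous_ofReal.tendsto (-1)).comp h
  have hzp : zp = E * (1 + A) / (A - 1) := by
    have h1 : zp = E * (((2 + A) * 1 + A) / (A * 1 - 2 + A)) :=
      tendsto_nhds_unique hp ((hg 1 hDen1).comp hUp)
    rw [h1, show (2 + A) * 1 + A = 2 * (1 + A) by ring,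
      show A * 1 - 2 + A = 2 * (A - 1) by ring,
      mul_div_mul_left _ _ (two_ne_zero), mul_div_assoc]
  have hzm : zm = E := by
    have h1 : zm = E * (((2 + A) * (-1) + A) / (A * (-1) - 2 + A)) :=
      tendsto_nhds_unique hm ((hg (-1) hDenm1).comp hUm)
    rw [h1, show (2 + A) * (-1) + A = (-2 : ℂ) by ring,
      show A * (-1) - 2 + A = (-2 : ℂ) by ring]
    norm_num
  -- derivative computation
  set U : ℂ := ((Real.tanh (t/2) : ℝ) : ℂ) with hU
  have hDt : A * U - 2 + A ≠ 0 := hDen U (by rw [hU]; exact Complex.ofReal_im _)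
  have htanh : HasDerivAt (fun s : ℝ => Real.tanh (s/2)) ((1 - Real.tanh (t/2)^2) * (1/2)) t := by
    have h2 : HasDerivAt (fun s : ℝ => s/2) (1/2 : ℝ) t := (hasDerivAt_id t).div_const 2
    exact (tanh_hasDerivAt (t/2)).comp t h2
  have hUc : HasDerivAt (fun s : ℝ => ((Real.tanh (s/2) : ℝ) : ℂ))
      (((1 - Real.tanh (t/2)^2) * (1/2) : ℝ) : ℂ) t := htanh.ofReal_comp
  have hu'2 : (((1 - Real.tanh (t/2)^2) * (1/2) : ℝ) : ℂ) = (1 - U^2) / 2 := by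
    rw [hU]; push_cast; ring
  rw [hu'2] at hUc
  have hN : HasDerivAt (fun s : ℝ => (2 + A) * ((Real.tanh (s/2) : ℝ) : ℂ) + A)
      ((2 + A) * ((1 - U^2) / 2)) t := (hUc.const_mul _).add_const A
  have hD : HasDerivAt (fun s : ℝ => A * ((Real.tanh (s/2) : ℝ) : ℂ) - 2 + A)
      (A * ((1 - U^2) / 2)) t := ((hUc.const_mul A).sub_const 2).add_const A
  have hQ : HasDerivAt (zgeo β a)
      (E * (((2 + A) * ((1 - U^2) / 2) * (A * U - 2 + A)
          - ((2 + A) * U + A) * (A * ((1 - U^2) / 2))) / (A * U - 2 + A) ^ 2)) t := by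
    have h := (hN.div hD hDt).const_mul E
    exact h.congr_of_eventuallyEq (by
      filter_upwards with s
      simp [zgeo, hE, hA])
  have hzgeo : zgeo β a t = E * (((2 + A) * U + A) / (A * U - 2 + A)) := by
    simp [zgeo, hE, hA, hU]
  rw [hQ.deriv, hzgeo, hzp, hzm]
  have := key_alg E A U hEne hDt hA1
  rw [mul_div_assoc] at this ⊢
  exact this
end

section
/- Let k ≥ 0 be an integer, η̂ ∈ {−1,+1}, and let f ∈ C²((0,∞)) ∩ L²((0,∞), t⁻² dt) be rapidly decreasing at infinity with t∂_t f ∈ L²((0,∞), t⁻² dt), satisfying the ODE t² f''(t) − (t + k η̂)² f(t) − k f(t) = 0 on (0,∞). Then f = 0. -/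
open Filter MeasureTheory Set

/-- Injectivity of the reduced normal operator: let `k ≥ 0`, `η̂ ∈ {−1,+1}`, and let
`f ∈ C²((0,∞)) ∩ L²((0,∞), t⁻²dt)` be rapidly decreasing at infinity (together with its
derivative), with `t ∂_t f ∈ L²((0,∞), t⁻²dt)` and suitable behavior at `0⁺`, satisfying
`t² f'' − (t + kη̂)² f − k f = 0` on `(0,∞)`. Then `f = 0`. -/
theorem stmt18 (k : ℕ) (η : ℝ) (hη : η = 1 ∨ η = -1) (f : ℝ → ℂ)
    (hreg : ContDiffOn ℝ 2 f (Ioi 0))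
    (hL2 : IntegrableOn (fun t => ‖f t‖ ^ 2 / t ^ 2) (Ioi 0))
    (hL2' : IntegrableOn (fun t => ‖t * deriv f t‖ ^ 2 / t ^ 2) (Ioi 0))
    (hdecay : ∀ n : ℕ, Tendsto (fun t => t ^ n * ‖f t‖) atTop (nhds 0))
    (hdecay' : ∀ n : ℕ, Tendsto (fun t => t ^ n * ‖deriv f t‖) atTop (nhds 0))
    (h0 : Tendsto f (nhdsWithin 0 (Ioi 0)) (nhds 0))
    (h0' : Tendsto (fun t : ℝ => (t : ℂ) * deriv f t) (nhdsWithin 0 (Ioi 0)) (nhds 0))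
    (hode : ∀ t : ℝ, 0 < t →
      (t : ℂ) ^ 2 * deriv (deriv f) t - ((t + k * η : ℝ) : ℂ) ^ 2 * f t - (k : ℂ) * f t = 0) :
    ∀ t : ℝ, 0 < t → f t = 0 := by
  -- `u = ‖f‖²` is convex on `(0,∞)` and tends to `0` at both ends, hence vanishes.
  set u : ℝ → ℝ := fun t => ‖f t‖ ^ 2 with hu_def
  -- differentiability facts
  have hopen : IsOpen (Ioi (0:ℝ)) := isOpen_Ioi
  have hf1 : ∀ t : ℝ, 0 < t → HasDerivAt f (deriv f t) t := by
    intro t ht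
    have := (hreg.differentiableOn (by norm_num)).differentiableAt
      (hopen.mem_nhds ht)
    exact this.hasDerivAt
  have hder : ContDiffOn ℝ 1 (deriv f) (Ioi 0) := by
    exact hreg.deriv_of_isOpen hopen (m := 1) (by norm_num)
  have hf2 : ∀ t : ℝ, 0 < t → HasDerivAt (deriv f) (deriv (deriv f) t) t := by
    intro t ht
    have := (hder.differentiableOn (by norm_num)).differentiableAt (hopen.mem_nhds ht)
    exact this.hasDerivAt
  -- ODE rewritten: f'' t = q t • f t, with q t ≥ 0
  set q : ℝ → ℝ := fun t => ((t + k * η) ^ 2 + k) / t ^ 2 with hq_def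
  have hqnn : ∀ t : ℝ, 0 < t → 0 ≤ q t := by
    intro t ht
    apply div_nonneg (by positivity) (by positivity)
  have hodeq : ∀ t : ℝ, 0 < t → deriv (deriv f) t = (q t : ℝ) • f t := by
    intro t ht
    have h := hode t ht
    have ht2 : ((t:ℂ)^2) ≠ 0 := by
      simp [pow_eq_zero_iff]
      exact_mod_cast ht.ne'
    have : (t : ℂ) ^ 2 * deriv (deriv f) t = (((t + k * η)^2 + k : ℝ) : ℂ) * f t := by
      push_cast at h ⊢
      linear_combination h
    rw [Complex.real_smul]
    have hq : ((q t : ℝ) : ℂ) * (t:ℂ)^2 = (((t + k * η)^2 + k : ℝ) : ℂ) := by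
      have htc : (t:ℂ) ≠ 0 := by exact_mod_cast ht.ne'
      rw [hq_def]; push_cast; field_simp
    apply mul_left_cancel₀ ht2
    linear_combination this - f t * hq
  -- first derivative of u
  set w : ℝ → ℝ := fun t => 2 * (inner ℝ (f t) (deriv f t) : ℝ) with hw_def
  have huderiv : ∀ t : ℝ, 0 < t → HasDerivAt u (w t) t := by
    intro t ht
    exact (hf1 t ht).norm_sq
  have hderiv_u_eq : ∀ t : ℝ, 0 < t → deriv u t = w t := fun t ht =>
    (huderiv t ht).deriv
  have hwderiv : ∀ t : ℝ, 0 < t →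
      HasDerivAt w (2 * ((inner ℝ (f t) (deriv (deriv f) t) : ℝ)
        + (inner ℝ (deriv f t) (deriv f t) : ℝ))) t := by
    intro t ht
    have := ((hf1 t ht).inner ℝ (hf2 t ht)).const_mul (2:ℝ)
    simpa [hw_def, mul_add] using this
  have hderiv2 : ∀ t : ℝ, 0 < t → HasDerivAt (deriv u)
      (2 * ((inner ℝ (f t) (deriv (deriv f) t) : ℝ)
        + (inner ℝ (deriv f t) (deriv f t) : ℝ))) t := by
    intro t ht
    have heq : deriv u =ᶠ[nhds t] w := by
      filter_upwards [hopen.mem_nhds ht] with s hs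
      exact hderiv_u_eq s hs
    exact (hwderiv t ht).congr_of_eventuallyEq heq
  have hconv : ConvexOn ℝ (Ioi 0) u := by
    apply convexOn_of_deriv2_nonneg (convex_Ioi 0)
    · intro t ht
      exact (huderiv t ht).continuousAt.continuousWithinAt
    · intro t ht
      rw [hopen.interior_eq] at ht
      exact ((huderiv t ht).differentiableAt).differentiableWithinAt
    · intro t ht
      rw [hopen.interior_eq] at ht
      exact ((hderiv2 t ht).differentiableAt).differentiableWithinAt
    · intro t ht
      rw [hopen.interior_eq] at ht
      have := (hderiv2 t ht).deriv
      have h2 : deriv^[2] u t = 2 * ((inner ℝ (f t) (deriv (deriv f) t) : ℝ)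
          + (inner ℝ (deriv f t) (deriv f t) : ℝ)) := by
        simpa [Function.iterate_succ, Function.comp] using this
      rw [h2, hodeq t ht, real_inner_smul_right]
      have h3 : (inner ℝ (f t) (f t) : ℝ) = ‖f t‖^2 := real_inner_self_eq_norm_sq _
      have h4 : (inner ℝ (deriv f t) (deriv f t) : ℝ) = ‖deriv f t‖^2 :=
        real_inner_self_eq_norm_sq _
      rw [h3, h4]
      have := hqnn t ht
      positivity
  -- limits of u at 0⁺ and ∞
  have hu0 : Tendsto u (nhdsWithin 0 (Ioi 0)) (nhds 0) := by
    have : Tendsto (fun t => ‖f t‖^2) (nhdsWithin 0 (Ioi 0)) (nhds (‖(0:ℂ)‖^2)) :=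
      (h0.norm).pow 2
    simpa using this
  have huinf : Tendsto u atTop (nhds 0) := by
    have h1 : Tendsto (fun t => ‖f t‖) atTop (nhds 0) := by
      have := hdecay 0
      simpa using this
    have := h1.pow 2
    simpa using this
  -- main argument: for all t > 0, u t = 0
  intro t ht
  have key : ∀ ε : ℝ, 0 < ε → u t < ε := by
    intro ε hε
    -- find a ∈ (0,t) with u a < ε/2
    have hev0 : ∀ᶠ s in nhdsWithin 0 (Ioi 0), u s < ε/2 :=
      hu0.eventually (Filter.Tendsto.eventually_lt_const (by linarith) tendsto_id)
    have hmem : Ioo (0:ℝ) t ∈ nhdsWithin 0 (Ioi 0) := by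
      rw [mem_nhdsWithin]
      exact ⟨Iio t, isOpen_Iio, ht, by
        intro x hx
        exact ⟨hx.2, hx.1⟩⟩
    obtain ⟨a, ha1, ha2⟩ := (hev0.and (eventually_mem_nhdsWithin.and
      (Filter.eventually_of_mem hmem (fun x hx => hx)))).exists
    obtain ⟨ha_mem, ha_Ioo⟩ := ha2
    -- find b > t with u b < ε/2
    have hevInf : ∀ᶠ s in atTop, u s < ε/2 :=
      huinf.eventually (Filter.Tendsto.eventually_lt_const (by linarith) tendsto_id)
    obtain ⟨b, hb1, hb2⟩ := (hevInf.and (eventually_gt_atTop t)).exists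
    -- convexity
    have hat : a < t := ha_Ioo.2
    have ha0 : 0 < a := ha_Ioo.1
    have hab : a < b := lt_trans hat hb2
    set lam : ℝ := (b - t) / (b - a) with hlam
    set mu : ℝ := (t - a) / (b - a) with hmu
    have hba : (0:ℝ) < b - a := by linarith
    have hlam0 : 0 ≤ lam := div_nonneg (by linarith) (by linarith)
    have hmu0 : 0 ≤ mu := div_nonneg (by linarith) (by linarith)
    have hsum : lam + mu = 1 := by
      rw [hlam, hmu, ← add_div, div_eq_one_iff_eq hba.ne']; ring
    have hcomb : lam • a + mu • b = t := by
      simp only [smul_eq_mul, hlam, hmu]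
      field_simp
      ring
    have := hconv.2 (mem_Ioi.mpr ha0) (mem_Ioi.mpr (lt_trans ht hb2))
      hlam0 hmu0 hsum
    rw [hcomb] at this
    have hua : 0 ≤ u a := by positivity
    have hub : 0 ≤ u b := by positivity
    have hl1 : lam ≤ 1 := by
      nlinarith
    have hm1 : mu ≤ 1 := by
      nlinarith
    calc u t ≤ lam * u a + mu * u b := this
      _ ≤ 1 * u a + 1 * u b := by
          apply add_le_add
          · exact mul_le_mul_of_nonneg_right hl1 hua
          · exact mul_le_mul_of_nonneg_right hm1 hub
      _ = u a + u b := by ring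
      _ < ε/2 + ε/2 := by exact add_lt_add ha1 hb1
      _ = ε := by ring
  have hut0 : u t ≤ 0 := by
    by_contra h
    push_neg at h
    exact absurd (key (u t) h) (lt_irrefl _)
  have : ‖f t‖ ^ 2 = 0 := le_antisymm hut0 (by positivity)
  have : ‖f t‖ = 0 := by
    nlinarith [norm_nonneg (f t)]
  exact norm_eq_zero.mp this
end
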